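/- The image of the Chiang-type lagrangian 𝓛₂ under the toric moment map (μ₁, μ₂) is exactly the line segment { (−1/2 − 2t, t) : t ∈ [−1/4, 0] } ⊂ ℝ²; in particular every point of 𝓛₂ satisfies μ₁ + 2μ₂ = −1/2, equivalently every homogeneous representative (z₀,z₁,z₂) of a point of 𝓛₂ satisfies |z₀| = |z₂|. -/

import Mathlib

/-! On `𝓛₂` the outer coordinates `X - iY` and `X + iY` are complex conjugate, hence of equal
modulus, a property of the point since it is invariant under rescaling. The squared norm of the
representative is `2(X² + Y² + Z²) = 2`, so `μ₂ = -(X² + Y²)/4` and `μ₁ = -Z²/2 = -1/2 - 2μ₂`;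
on the unit sphere `X² + Y²` takes every value in `[0, 1]`. -/

open Complex

/-- The vector `(X - iY, √2 i Z, X + iY)` in `ℂ³`. -/
noncomputable def sphereVec (X Y Z : ℝ) : Fin 3 → ℂ :=
  ![(X : ℂ) - Complex.I * Y, (Real.sqrt 2 : ℂ) * Complex.I * Z, (X : ℂ) + Complex.I * Y]

lemma sphereVec_ne_zero {X Y Z : ℝ} (h : X ^ 2 + Y ^ 2 + Z ^ 2 = 1) :
    sphereVec X Y Z ≠ 0 := by
  intro h0
  have h0' : (X : ℂ) - Complex.I * Y = 0 := congrFun h0 0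
  have h2' : (X : ℂ) + Complex.I * Y = 0 := congrFun h0 2
  have h1' : (Real.sqrt 2 : ℂ) * Complex.I * Z = 0 := congrFun h0 1
  have hX : X = 0 := by
    have := congrArg Complex.re (by linear_combination h0' + h2' : (2 : ℂ) * X = 0)
    simpa using this
  have hY : Y = 0 := by
    have := congrArg Complex.im (by linear_combination h2' - h0' : (2 : ℂ) * Complex.I * Y = 0)
    simpa using this
  have hZ : Z = 0 := by
    rcases mul_eq_zero.mp h1' with h' | h'
    · rcases mul_eq_zero.mp h' with h'' | h''
      · exact absurd h'' (by simp [Complex.ext_iff, Real.sqrt_eq_zero'])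
      · exact absurd h'' Complex.I_ne_zero
    · exact_mod_cast h'
  rw [hX, hY, hZ] at h
  norm_num at h

/-- The Chiang-type lagrangian `𝓛₂ ⊆ ℙ(ℂ³)`, in its real description. -/
noncomputable def ChiangL2 : Set (Projectivization ℂ (Fin 3 → ℂ)) :=
  {P | ∃ (X Y Z : ℝ) (h : X ^ 2 + Y ^ 2 + Z ^ 2 = 1),
    P = Projectivization.mk ℂ (sphereVec X Y Z) (sphereVec_ne_zero h)}

/-- The moment map `μ₂` on (homogeneous coordinate vectors for) `ℙ(ℂ³)`:
`μ₂(z) = -|z₂|² / (2(|z₀|² + |z₁|² + |z₂|²))`. -/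
noncomputable def mu2 (z : Fin 3 → ℂ) : ℝ :=
  -‖z 2‖ ^ 2 /
    (2 * (‖z 0‖ ^ 2 + ‖z 1‖ ^ 2 + ‖z 2‖ ^ 2))

/-- The moment map `μ₁` on (homogeneous coordinate vectors for) `ℙ(ℂ³)`:
`μ₁(z) = -|z₁|² / (2(|z₀|² + |z₁|² + |z₂|²))`. -/
noncomputable def mu1 (z : Fin 3 → ℂ) : ℝ :=
  -‖z 1‖ ^ 2 /
    (2 * (‖z 0‖ ^ 2 + ‖z 1‖ ^ 2 + ‖z 2‖ ^ 2))

/-- `μ₂` as a function on the projective plane, via the canonical representative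
(`μ₂` on vectors is scale-invariant, so this is the descended function). -/
noncomputable def mu2P (P : Projectivization ℂ (Fin 3 → ℂ)) : ℝ := mu2 P.rep

/-- `μ₁` as a function on the projective plane, via the canonical representative
(`μ₁` on vectors is scale-invariant, so this is the descended function). -/
noncomputable def mu1P (P : Projectivization ℂ (Fin 3 → ℂ)) : ℝ := mu1 P.rep

open ComplexConjugate

lemma mu1_smul {a : ℂ} (ha : a ≠ 0) (z : Fin 3 → ℂ) : mu1 (a • z) = mu1 z := by
  have hc : ‖a‖ ^ 2 ≠ 0 := by positivity
  simp only [mu1, Pi.smul_apply, smul_eq_mul, norm_mul, mul_pow, ← mul_add]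
  rw [mul_left_comm 2, ← mul_neg, mul_div_mul_left _ _ hc]

lemma mu2_smul {a : ℂ} (ha : a ≠ 0) (z : Fin 3 → ℂ) : mu2 (a • z) = mu2 z := by
  have hc : ‖a‖ ^ 2 ≠ 0 := by positivity
  simp only [mu2, Pi.smul_apply, smul_eq_mul, norm_mul, mul_pow, ← mul_add]
  rw [mul_left_comm 2, ← mul_neg, mul_div_mul_left _ _ hc]

lemma exists_smul_eq_rep_mk {z : Fin 3 → ℂ} (hz : z ≠ 0) :
    ∃ a : ℂ, a ≠ 0 ∧ a • z = (Projectivization.mk ℂ z hz).rep := by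
  obtain ⟨a, ha⟩ := (Projectivization.mk_eq_mk_iff ℂ _ _ (Projectivization.rep_nonzero _) hz).mp
    (Projectivization.mk_rep _)
  exact ⟨a, a.ne_zero, ha⟩

lemma mu1P_mk {z : Fin 3 → ℂ} (hz : z ≠ 0) : mu1P (Projectivization.mk ℂ z hz) = mu1 z := by
  obtain ⟨a, ha, h⟩ := exists_smul_eq_rep_mk hz
  rw [mu1P, ← h, mu1_smul ha]

lemma mu2P_mk {z : Fin 3 → ℂ} (hz : z ≠ 0) : mu2P (Projectivization.mk ℂ z hz) = mu2 z := by
  obtain ⟨a, ha, h⟩ := exists_smul_eq_rep_mk hz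
  rw [mu2P, ← h, mu2_smul ha]

lemma norm_apply_eq_of_mk_eq_mk {ι : Type*} {v w : ι → ℂ} {hv : v ≠ 0} {hw : w ≠ 0}
    (hvw : Projectivization.mk ℂ v hv = Projectivization.mk ℂ w hw) {i j : ι}
    (hij : ‖w i‖ = ‖w j‖) : ‖v i‖ = ‖v j‖ := by
  obtain ⟨a, rfl⟩ := (Projectivization.mk_eq_mk_iff' ℂ _ _ hv hw).mp hvw
  simp only [Pi.smul_apply, smul_eq_mul, norm_mul, hij]

lemma sphereVec_two (X Y Z : ℝ) : sphereVec X Y Z 2 = conj (sphereVec X Y Z 0) := by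
  simp [sphereVec]

lemma norm_sphereVec_two (X Y Z : ℝ) : ‖sphereVec X Y Z 2‖ = ‖sphereVec X Y Z 0‖ := by
  rw [sphereVec_two, norm_conj]

lemma norm_sq_sphereVec_zero (X Y Z : ℝ) : ‖sphereVec X Y Z 0‖ ^ 2 = X ^ 2 + Y ^ 2 := by
  simp [sphereVec, Complex.sq_norm, normSq_apply]
  ring

lemma norm_sq_sphereVec_one (X Y Z : ℝ) : ‖sphereVec X Y Z 1‖ ^ 2 = 2 * Z ^ 2 := by
  simp [sphereVec, mul_pow]

lemma sum_norm_sq_sphereVec {X Y Z : ℝ} (h : X ^ 2 + Y ^ 2 + Z ^ 2 = 1) :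
    ‖sphereVec X Y Z 0‖ ^ 2 + ‖sphereVec X Y Z 1‖ ^ 2 + ‖sphereVec X Y Z 2‖ ^ 2 = 2 := by
  rw [norm_sphereVec_two, norm_sq_sphereVec_zero, norm_sq_sphereVec_one]
  linear_combination 2 * h

lemma mu1_sphereVec {X Y Z : ℝ} (h : X ^ 2 + Y ^ 2 + Z ^ 2 = 1) :
    mu1 (sphereVec X Y Z) = -(1 / 2) - 2 * (-(X ^ 2 + Y ^ 2) / 4) := by
  rw [mu1, sum_norm_sq_sphereVec h, norm_sq_sphereVec_one]
  linear_combination -h / 2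

lemma mu2_sphereVec {X Y Z : ℝ} (h : X ^ 2 + Y ^ 2 + Z ^ 2 = 1) :
    mu2 (sphereVec X Y Z) = -(X ^ 2 + Y ^ 2) / 4 := by
  rw [mu2, sum_norm_sq_sphereVec h, norm_sphereVec_two, norm_sq_sphereVec_zero]
  ring

lemma moment_mk_sphereVec {X Y Z : ℝ} (h : X ^ 2 + Y ^ 2 + Z ^ 2 = 1) :
    (mu1P (Projectivization.mk ℂ (sphereVec X Y Z) (sphereVec_ne_zero h)),
        mu2P (Projectivization.mk ℂ (sphereVec X Y Z) (sphereVec_ne_zero h))) =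
      (-(1 / 2) - 2 * (-(X ^ 2 + Y ^ 2) / 4), -(X ^ 2 + Y ^ 2) / 4) := by
  rw [mu1P_mk, mu2P_mk, mu1_sphereVec h, mu2_sphereVec h]

lemma exists_sphere_of_mem_Icc {t : ℝ} (ht : t ∈ Set.Icc (-(1 / 4) : ℝ) 0) :
    ∃ X Z : ℝ, X ^ 2 + 0 ^ 2 + Z ^ 2 = 1 ∧ -(X ^ 2 + 0 ^ 2) / 4 = t := by
  have hX := Real.sq_sqrt (by linarith [ht.2] : 0 ≤ -4 * t)
  have hZ := Real.sq_sqrt (by linarith [ht.1] : 0 ≤ 1 + 4 * t)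
  exact ⟨√(-4 * t), √(1 + 4 * t), by rw [hX, hZ]; ring, by rw [hX]; ring⟩

lemma image_moment_ChiangL2 :
    (fun P => (mu1P P, mu2P P)) '' ChiangL2 =
      {q : ℝ × ℝ | ∃ t ∈ Set.Icc (-(1 / 4) : ℝ) 0, q = (-(1 / 2) - 2 * t, t)} := by
  ext q
  constructor
  · rintro ⟨_, ⟨X, Y, Z, h, rfl⟩, rfl⟩
    refine ⟨-(X ^ 2 + Y ^ 2) / 4, ⟨?_, ?_⟩, moment_mk_sphereVec h⟩
    · nlinarith [sq_nonneg Z]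
    · nlinarith [sq_nonneg X, sq_nonneg Y]
  · rintro ⟨t, ht, rfl⟩
    obtain ⟨X, Z, h, rfl⟩ := exists_sphere_of_mem_Icc ht
    exact ⟨_, ⟨X, 0, Z, h, rfl⟩, moment_mk_sphereVec h⟩

/-- The image of `𝓛₂` under the toric moment map `(μ₁, μ₂)` is exactly the
segment `{(-1/2 - 2t, t) : t ∈ [-1/4, 0]}`; in particular every point of `𝓛₂` satisfies
`μ₁ + 2μ₂ = -1/2`, equivalently every homogeneous representative `(z₀, z₁, z₂)` of a point
of `𝓛₂` satisfies `|z₀| = |z₂|`. -/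
theorem stmt_8 :
    (fun P => (mu1P P, mu2P P)) '' ChiangL2 =
      {q : ℝ × ℝ | ∃ t ∈ Set.Icc (-(1 / 4) : ℝ) 0, q = (-(1 / 2) - 2 * t, t)} ∧
    (∀ P ∈ ChiangL2, mu1P P + 2 * mu2P P = -(1 / 2)) ∧
    (∀ P ∈ ChiangL2, ∀ (z : Fin 3 → ℂ) (hz : z ≠ 0),
      Projectivization.mk ℂ z hz = P → ‖z 0‖ = ‖z 2‖) := by
  refine ⟨image_moment_ChiangL2, fun P hP => ?_, ?_⟩
  · obtain ⟨t, -, ht⟩ :=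
      image_moment_ChiangL2 ▸ Set.mem_image_of_mem (fun P => (mu1P P, mu2P P)) hP
    simp only [Prod.ext_iff] at ht
    linarith [ht.1, ht.2]
  · rintro P ⟨X, Y, Z, h, rfl⟩ z hz hzP
    exact norm_apply_eq_of_mk_eq_mk hzP (norm_sphereVec_two X Y Z).symm
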